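/- arXiv:2206.06711 — 6 statements merged into one kernel-verified Lean document; each statement's English description precedes it below -/
import Mathlib

section
/- Let X be a random state, T an action in {0,...,m-1} with conditional distribution π_b(t|X), and E an independently sampled pseudo-action with conditional distribution π_e(t|X). Then the conditional distribution of the observed outcome Y given the event {E = T} and X is the mixture Σ_t [π_e(t|X)π_b(t|X) / Σ_{t'} π_e(t'|X)π_b(t'|X)] · P_{Y^t|X}, where P_{Y^t|X} is the conditional law of the potential outcome under action t. -/
open MeasureTheory ProbabilityTheory

/-- Proposition: the conditional distribution of the observed outcome `Y` given the event
`{E = T}` (and given `X = x`, encoded by working under the conditional measure `μ`) is the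
mixture `∑ t, (πe t * πb t / ∑ t', πe t' * πb t') • P_{Y^t}`. -/
theorem stmt_0 {Ω : Type*} [MeasurableSpace Ω] (μ : Measure Ω) [IsProbabilityMeasure μ]
    (m : ℕ) (hm : 0 < m) (T E : Ω → Fin m) (Y : Ω → ℝ) (Ypot : Fin m → Ω → ℝ)
    (hT : Measurable T) (hE : Measurable E) (hY : Measurable Y)
    (hYpot : ∀ t, Measurable (Ypot t))
    -- consistency: Y = Y^T a.s.
    (hcons : ∀ᵐ ω ∂μ, Y ω = Ypot (T ω) ω)
    -- no unmeasured confounders: (Y^0, ..., Y^{m-1}) ⟂ T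
    (hTY : ∀ (t : Fin m) (S : Set (Fin m → ℝ)), MeasurableSet S →
      μ ({ω | T ω = t} ∩ {ω | (fun u => Ypot u ω) ∈ S})
        = μ {ω | T ω = t} * μ {ω | (fun u => Ypot u ω) ∈ S})
    -- E ⟂ (T, Y^0, ..., Y^{m-1})
    (hEindep : ∀ (e : Fin m) (Bset : Set (Fin m × (Fin m → ℝ))), MeasurableSet Bset →
      μ ({ω | E ω = e} ∩ {ω | (T ω, fun u => Ypot u ω) ∈ Bset})
        = μ {ω | E ω = e} * μ {ω | (T ω, fun u => Ypot u ω) ∈ Bset})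
    (πb πe : Fin m → ℝ)
    (hπb : ∀ t, (μ {ω | T ω = t}).toReal = πb t)
    (hπe : ∀ t, (μ {ω | E ω = t}).toReal = πe t)
    -- positivity
    (hpos : ∀ t, 0 < πb t) :
    ∀ B : Set ℝ, MeasurableSet B →
      ((μ[|{ω | E ω = T ω}]) {ω | Y ω ∈ B}).toReal
        = ∑ t, (πe t * πb t / ∑ t', πe t' * πb t') * (μ {ω | Ypot t ω ∈ B}).toReal := by
  intro B hB
  classical
  have hTt : ∀ t : Fin m, MeasurableSet {ω | T ω = t} := fun t => hT (measurableSet_singleton t)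
  have hEt : ∀ t : Fin m, MeasurableSet {ω | E ω = t} := fun t => hE (measurableSet_singleton t)
  have hQt : ∀ t : Fin m, MeasurableSet {ω | Ypot t ω ∈ B} := fun t => (hYpot t) hB
  have hAun : {ω | E ω = T ω} = ⋃ t : Fin m, ({ω | E ω = t} ∩ {ω | T ω = t}) := by
    ext ω
    simp only [Set.mem_iUnion, Set.mem_inter_iff, Set.mem_setOf_eq]
    constructor
    · intro h; exact ⟨T ω, h, rfl⟩
    · rintro ⟨t, h1, h2⟩; rw [h1, h2]
  have hAm : MeasurableSet {ω | E ω = T ω} := by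
    rw [hAun]; exact MeasurableSet.iUnion fun t => (hEt t).inter (hTt t)
  -- independence steps
  have hstep : ∀ t : Fin m,
      μ ({ω | E ω = t} ∩ ({ω | T ω = t} ∩ {ω | Ypot t ω ∈ B}))
        = μ {ω | E ω = t} * (μ {ω | T ω = t} * μ {ω | Ypot t ω ∈ B}) := by
    intro t
    have hBset : MeasurableSet {p : Fin m × (Fin m → ℝ) | p.1 = t ∧ p.2 t ∈ B} :=
      (measurable_fst (measurableSet_singleton t)).inter
        (((measurable_pi_apply t).comp measurable_snd) hB)
    have h1 : μ ({ω | E ω = t} ∩ ({ω | T ω = t} ∩ {ω | Ypot t ω ∈ B}))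
        = μ {ω | E ω = t} * μ ({ω | T ω = t} ∩ {ω | Ypot t ω ∈ B}) :=
      hEindep t {p : Fin m × (Fin m → ℝ) | p.1 = t ∧ p.2 t ∈ B} hBset
    have h2 : μ ({ω | T ω = t} ∩ {ω | Ypot t ω ∈ B})
        = μ {ω | T ω = t} * μ {ω | Ypot t ω ∈ B} :=
      hTY t {f | f t ∈ B} ((measurable_pi_apply t) hB)
    rw [h1, h2]
  have hstepA : ∀ t : Fin m,
      μ ({ω | E ω = t} ∩ {ω | T ω = t}) = μ {ω | E ω = t} * μ {ω | T ω = t} :=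
    fun t => hEindep t {p : Fin m × (Fin m → ℝ) | p.1 = t}
      (measurable_fst (measurableSet_singleton t))
  -- a.e. rewrite of Y
  have hae : μ ({ω | E ω = T ω} ∩ {ω | Y ω ∈ B})
      = μ ({ω | E ω = T ω} ∩ {ω | Ypot (T ω) ω ∈ B}) := by
    apply measure_congr
    filter_upwards [hcons] with ω hω
    apply propext
    show (ω ∈ {ω | E ω = T ω} ∩ {ω | Y ω ∈ B}) ↔ (ω ∈ {ω | E ω = T ω} ∩ {ω | Ypot (T ω) ω ∈ B})
    simp only [Set.mem_inter_iff, Set.mem_setOf_eq, hω]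
  have hABun : {ω | E ω = T ω} ∩ {ω | Ypot (T ω) ω ∈ B}
      = ⋃ t : Fin m, ({ω | E ω = t} ∩ ({ω | T ω = t} ∩ {ω | Ypot t ω ∈ B})) := by
    ext ω
    simp only [Set.mem_iUnion, Set.mem_inter_iff, Set.mem_setOf_eq]
    constructor
    · rintro ⟨h1, h2⟩; exact ⟨T ω, h1, rfl, h2⟩
    · rintro ⟨t, h1, h2, h3⟩; exact ⟨by rw [h1, h2], by rw [h2]; exact h3⟩
  have hdisj1 : Pairwise (Function.onFun Disjoint
      fun t : Fin m => {ω | E ω = t} ∩ ({ω | T ω = t} ∩ {ω | Ypot t ω ∈ B})) := by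
    intro s t hst
    refine Set.disjoint_left.mpr ?_
    rintro ω ⟨_, h1, _⟩ ⟨_, h2, _⟩
    exact hst (h1.symm.trans h2)
  have hdisj2 : Pairwise (Function.onFun Disjoint
      fun t : Fin m => {ω | E ω = t} ∩ {ω | T ω = t}) := by
    intro s t hst
    refine Set.disjoint_left.mpr ?_
    rintro ω ⟨_, h1⟩ ⟨_, h2⟩
    exact hst (h1.symm.trans h2)
  have hnum : μ ({ω | E ω = T ω} ∩ {ω | Y ω ∈ B})
      = ∑ t : Fin m, μ {ω | E ω = t} * (μ {ω | T ω = t} * μ {ω | Ypot t ω ∈ B}) := by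
    rw [hae, hABun, measure_iUnion hdisj1
      (fun t => (hEt t).inter ((hTt t).inter (hQt t))), tsum_fintype]
    exact Finset.sum_congr rfl fun t _ => hstep t
  have hden : μ {ω | E ω = T ω} = ∑ t : Fin m, μ {ω | E ω = t} * μ {ω | T ω = t} := by
    rw [hAun, measure_iUnion hdisj2 (fun t => (hEt t).inter (hTt t)), tsum_fintype]
    exact Finset.sum_congr rfl fun t _ => hstepA t
  rw [cond_apply hAm, hnum, hden, ENNReal.toReal_mul, ENNReal.toReal_inv,
    ENNReal.toReal_sum (fun t _ => ENNReal.mul_ne_top (measure_ne_top μ _) (measure_ne_top μ _)),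
    ENNReal.toReal_sum (fun t _ => ENNReal.mul_ne_top (measure_ne_top μ _)
      (ENNReal.mul_ne_top (measure_ne_top μ _) (measure_ne_top μ _)))]
  simp only [ENNReal.toReal_mul, hπb, hπe]
  rw [Finset.mul_sum]
  exact Finset.sum_congr rfl fun t _ => by ring
end

section
/- Define the pseudo policy π_a(t|x) = [π_e(t|x)/π_b(t|x)] / Σ_{t'} [π_e(t'|x)/π_b(t'|x)]. If the pseudo action A is sampled from π_a(·|X) independently of (T, Y^0,...,Y^{m-1}) given X, then for each t, the posterior probability P(T = t | A = T, X) equals π_e(t|X). Consequently, the conditional law of Y given {A = T} and X equals Σ_t π_e(t|X) P_{Y^t|X} = P_{Y^{π_e}|X}. -/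
open MeasureTheory ProbabilityTheory

/-!
With `S = ∑ t, πe t / πb t`, independence of `A` and `T` gives
`P(A = t, T = t) = πa t * πb t = πe t / S`, hence `P(A = T) = 1 / S` and the posterior of `T`
given `A = T` is `πe`. On `{A = t, T = t}` consistency replaces `Y` by `Y^t`, and the two
independence assumptions factor `P(A = t, T = t, Y^t ∈ B)` as `(πe t / S) * P(Y^t ∈ B)`.
-/

section

variable {Ω ι : Type*} [MeasurableSpace Ω] {μ : Measure Ω}
  [Fintype ι] [MeasurableSpace ι] [MeasurableSingletonClass ι]

theorem measure_eq_sum_measure_setOf_eq_inter {T : Ω → ι} (hT : Measurable T) (s : Set Ω) :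
    μ s = ∑ t, μ ({ω | T ω = t} ∩ s) := by
  -- Summing the fibres of `T` under `μ.restrict s` needs no measurability of `s`.
  have h := sum_measure_preimage_singleton (μ := μ.restrict s) Finset.univ
    fun t _ => hT (measurableSet_singleton t)
  simp only [Measure.restrict_apply (hT (measurableSet_singleton _)), Finset.coe_univ,
    Set.preimage_univ, Measure.restrict_apply_univ] at h
  exact h.symm

theorem sum_toReal_measure_setOf_eq [IsProbabilityMeasure μ] {A : Ω → ι} (hA : Measurable A) :
    ∑ t, (μ {ω | A ω = t}).toReal = 1 := by
  rw [← ENNReal.toReal_sum fun t _ => measure_ne_top μ _]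
  simpa using congrArg ENNReal.toReal (measure_eq_sum_measure_setOf_eq_inter (μ := μ) hA .univ).symm

theorem measure_setOf_eq_inter_eq_sum {A T : Ω → ι} (hT : Measurable T) (s : Set Ω) :
    μ ({ω | A ω = T ω} ∩ s) = ∑ t, μ ({ω | A ω = t} ∩ ({ω | T ω = t} ∩ s)) := by
  rw [measure_eq_sum_measure_setOf_eq_inter hT]
  refine Finset.sum_congr rfl fun t _ => congrArg μ ?_
  ext ω
  simp only [Set.mem_inter_iff, Set.mem_ofPred_eq]
  constructor
  · rintro ⟨rfl, hAT, hs⟩; exact ⟨hAT, rfl, hs⟩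
  · rintro ⟨hA, hT, hs⟩; exact ⟨hT, hA.trans hT.symm, hs⟩

end

theorem setOf_eq_inter_setOf_eq {Ω ι : Type*} {A T : Ω → ι} (t : ι) :
    {ω | A ω = T ω} ∩ {ω | T ω = t} = {ω | A ω = t} ∩ {ω | T ω = t} := by
  ext ω
  simp only [Set.mem_inter_iff, Set.mem_ofPred_eq]
  constructor
  · rintro ⟨hAT, rfl⟩; exact ⟨hAT, rfl⟩
  · rintro ⟨hA, hT⟩; exact ⟨hA.trans hT.symm, hT⟩

theorem setOf_eq_inter_ae_eq_of_ae_eq_potential {Ω ι β : Type*} [MeasurableSpace Ω]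
    {μ : Measure Ω} {T : Ω → ι} {Y : Ω → β} {Ypot : ι → Ω → β}
    (hcons : ∀ᵐ ω ∂μ, Y ω = Ypot (T ω) ω) (t : ι) (B : Set β) :
    ({ω | T ω = t} ∩ {ω | Y ω ∈ B} : Set Ω)
      =ᵐ[μ] ({ω | T ω = t} ∩ {ω | Ypot t ω ∈ B} : Set Ω) := by
  filter_upwards [hcons] with ω hω
  change (T ω = t ∧ Y ω ∈ B) = (T ω = t ∧ Ypot t ω ∈ B)
  exact propext (and_congr_right fun hT => by rw [hω, hT])

theorem sum_ne_zero_of_sum_div_sum_eq_one {ι : Type*} {s : Finset ι} {c : ι → ℝ}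
    (h : ∑ i ∈ s, c i / ∑ j ∈ s, c j = 1) : ∑ j ∈ s, c j ≠ 0 := by
  intro h0
  simp [h0] at h

theorem measure_setOf_eq_inter_potential_mem_eq_mul {Ω ι β : Type*} [MeasurableSpace Ω]
    [MeasurableSpace ι] [MeasurableSingletonClass ι] [MeasurableSpace β] {μ : Measure Ω}
    {T A : Ω → ι} {Ypot : ι → Ω → β}
    (hTY : ∀ (t : ι) (S : Set (ι → β)), MeasurableSet S →
      μ ({ω | T ω = t} ∩ {ω | (fun u => Ypot u ω) ∈ S})
        = μ {ω | T ω = t} * μ {ω | (fun u => Ypot u ω) ∈ S})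
    (hAindep : ∀ (a : ι) (Bset : Set (ι × (ι → β))), MeasurableSet Bset →
      μ ({ω | A ω = a} ∩ {ω | (T ω, fun u => Ypot u ω) ∈ Bset})
        = μ {ω | A ω = a} * μ {ω | (T ω, fun u => Ypot u ω) ∈ Bset})
    (t : ι) {B : Set β} (hB : MeasurableSet B) :
    μ ({ω | A ω = t} ∩ ({ω | T ω = t} ∩ {ω | Ypot t ω ∈ B}))
      = μ {ω | A ω = t} * (μ {ω | T ω = t} * μ {ω | Ypot t ω ∈ B}) := by
  have hBt : MeasurableSet {f : ι → β | f t ∈ B} := measurable_pi_apply t hB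
  calc μ ({ω | A ω = t} ∩ ({ω | T ω = t} ∩ {ω | Ypot t ω ∈ B}))
      = μ {ω | A ω = t} * μ ({ω | T ω = t} ∩ {ω | Ypot t ω ∈ B}) :=
        hAindep t (({t} : Set ι) ×ˢ {f : ι → β | f t ∈ B}) ((measurableSet_singleton t).prod hBt)
    _ = μ {ω | A ω = t} * (μ {ω | T ω = t} * μ {ω | Ypot t ω ∈ B}) :=
        congrArg _ (hTY t _ hBt)

/-- The covariate is fixed throughout: `μ` plays the role of the conditional law given `X = x`. -/
theorem stmt_2_general {Ω : Type*} [MeasurableSpace Ω] (μ : Measure Ω) [IsProbabilityMeasure μ]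
    (m : ℕ) (T A : Ω → Fin m) (Y : Ω → ℝ) (Ypot : Fin m → Ω → ℝ)
    (hT : Measurable T) (hA : Measurable A)
    -- consistency: Y = Y^T a.s.
    (hcons : ∀ᵐ ω ∂μ, Y ω = Ypot (T ω) ω)
    -- unconfoundedness: (Y^0, ..., Y^{m-1}) ⟂ T
    (hTY : ∀ (t : Fin m) (S : Set (Fin m → ℝ)), MeasurableSet S →
      μ ({ω | T ω = t} ∩ {ω | (fun u => Ypot u ω) ∈ S})
        = μ {ω | T ω = t} * μ {ω | (fun u => Ypot u ω) ∈ S})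
    -- A ⟂ (T, Y^0, ..., Y^{m-1})
    (hAindep : ∀ (a : Fin m) (Bset : Set (Fin m × (Fin m → ℝ))), MeasurableSet Bset →
      μ ({ω | A ω = a} ∩ {ω | (T ω, fun u => Ypot u ω) ∈ Bset})
        = μ {ω | A ω = a} * μ {ω | (T ω, fun u => Ypot u ω) ∈ Bset})
    (πb πe : Fin m → ℝ)
    (hπb : ∀ t, (μ {ω | T ω = t}).toReal = πb t)
    (hpos : ∀ t, 0 < πb t)
    (hπe1 : ∑ t, πe t = 1)
    -- A is sampled from the pseudo policy πa
    (hlawA : ∀ t, (μ {ω | A ω = t}).toReal = (πe t / πb t) / ∑ t', πe t' / πb t') :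
    (∀ t, ((μ[|{ω | A ω = T ω}]) {ω | T ω = t}).toReal = πe t)
      ∧ ∀ B : Set ℝ, MeasurableSet B →
        ((μ[|{ω | A ω = T ω}]) {ω | Y ω ∈ B}).toReal
          = ∑ t, πe t * (μ {ω | Ypot t ω ∈ B}).toReal := by
  have hS : ∑ t', πe t' / πb t' ≠ 0 := sum_ne_zero_of_sum_div_sum_eq_one <| by
    simpa only [hlawA] using sum_toReal_measure_setOf_eq (μ := μ) hA
  set S := ∑ t', πe t' / πb t'
  have hjoint : ∀ t {B : Set ℝ}, MeasurableSet B →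
      (μ ({ω | A ω = t} ∩ ({ω | T ω = t} ∩ {ω | Ypot t ω ∈ B}))).toReal
        = πe t / S * (μ {ω | Ypot t ω ∈ B}).toReal := fun t B hB => by
    rw [measure_setOf_eq_inter_potential_mem_eq_mul hTY hAindep t hB, ENNReal.toReal_mul,
      ENNReal.toReal_mul, hlawA, hπb]
    field_simp [(hpos t).ne']
  have hjoint_univ : ∀ t, (μ ({ω | A ω = t} ∩ {ω | T ω = t})).toReal = πe t / S := fun t => by
    simpa using hjoint t MeasurableSet.univ
  have hdiag : (μ {ω | A ω = T ω}).toReal = S⁻¹ := by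
    have h := measure_setOf_eq_inter_eq_sum (μ := μ) (A := A) hT Set.univ
    simp only [Set.inter_univ] at h
    rw [h, ENNReal.toReal_sum fun t _ => measure_ne_top μ _]
    simp only [hjoint_univ, ← Finset.sum_div, hπe1, one_div]
  have hcond : ∀ u, ((μ[|{ω | A ω = T ω}]) u).toReal = S * (μ ({ω | A ω = T ω} ∩ u)).toReal :=
    fun u => by
      rw [cond_apply (measurableSet_eq_fun hA hT), ENNReal.toReal_mul, ENNReal.toReal_inv, hdiag,
        inv_inv]
  refine ⟨fun t => ?_, fun B hB => ?_⟩
  · rw [hcond, setOf_eq_inter_setOf_eq, hjoint_univ]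
    field_simp
  · rw [hcond, measure_setOf_eq_inter_eq_sum hT,
      ENNReal.toReal_sum fun t _ => measure_ne_top μ _, Finset.mul_sum]
    refine Finset.sum_congr rfl fun t _ => ?_
    rw [measure_congr ((Filter.EventuallyEq.refl _ _).inter
      (setOf_eq_inter_ae_eq_of_ae_eq_potential hcons t B)), hjoint t hB]
    field_simp

/-- With the pseudo policy `πa(t) = (πe t / πb t) / ∑ t', πe t' / πb t'` and pseudo action `A`
drawn from `πa` independently of `(T, Y^0, ..., Y^{m-1})` (all conditionally on `X = x`,
encoded by the measure `μ`), the posterior satisfies `P(T = t | A = T) = πe t`, and the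
conditional law of `Y` given `{A = T}` is `∑ t, πe t • P_{Y^t} = P_{Y^{πe}}`. -/
theorem stmt_2 {Ω : Type*} [MeasurableSpace Ω] (μ : Measure Ω) [IsProbabilityMeasure μ]
    (m : ℕ) (hm : 0 < m) (T A : Ω → Fin m) (Y : Ω → ℝ) (Ypot : Fin m → Ω → ℝ)
    (hT : Measurable T) (hA : Measurable A) (hY : Measurable Y)
    (hYpot : ∀ t, Measurable (Ypot t))
    -- consistency: Y = Y^T a.s.
    (hcons : ∀ᵐ ω ∂μ, Y ω = Ypot (T ω) ω)
    -- unconfoundedness: (Y^0, ..., Y^{m-1}) ⟂ T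
    (hTY : ∀ (t : Fin m) (S : Set (Fin m → ℝ)), MeasurableSet S →
      μ ({ω | T ω = t} ∩ {ω | (fun u => Ypot u ω) ∈ S})
        = μ {ω | T ω = t} * μ {ω | (fun u => Ypot u ω) ∈ S})
    -- A ⟂ (T, Y^0, ..., Y^{m-1})
    (hAindep : ∀ (a : Fin m) (Bset : Set (Fin m × (Fin m → ℝ))), MeasurableSet Bset →
      μ ({ω | A ω = a} ∩ {ω | (T ω, fun u => Ypot u ω) ∈ Bset})
        = μ {ω | A ω = a} * μ {ω | (T ω, fun u => Ypot u ω) ∈ Bset})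
    (πb πe : Fin m → ℝ)
    (hπb : ∀ t, (μ {ω | T ω = t}).toReal = πb t)
    (hpos : ∀ t, 0 < πb t)
    (hπe0 : ∀ t, 0 ≤ πe t) (hπe1 : ∑ t, πe t = 1)
    -- A is sampled from the pseudo policy πa
    (hlawA : ∀ t, (μ {ω | A ω = t}).toReal = (πe t / πb t) / ∑ t', πe t' / πb t') :
    (∀ t, ((μ[|{ω | A ω = T ω}]) {ω | T ω = t}).toReal = πe t)
      ∧ ∀ B : Set ℝ, MeasurableSet B →
        ((μ[|{ω | A ω = T ω}]) {ω | Y ω ∈ B}).toReal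
          = ∑ t, πe t * (μ {ω | Ypot t ω ∈ B}).toReal :=
  stmt_2_general μ m T A Y Ypot hT hA hcons hTY hAindep πb πe hπb hpos hπe1 hlawA
end

section
/- Let Z_1,...,Z_{n+1} be independent random variables with Z_i ~ P_i, where each P_i for i ≥ 2 is absolutely continuous with respect to P_1. Then Z_1,...,Z_{n+1} are weighted exchangeable with weight functions w_1 = 1 and w_i = dP_i/dP_1 for i ≥ 2; i.e., their joint density factorizes as f(z_1,...,z_{n+1}) = Π_{i=1}^{n+1} w_i(z_i) g(z_1,...,z_{n+1}) where g is invariant under any permutation of its arguments. -/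
open MeasureTheory
open scoped ENNReal

private lemma lintegral_pi_prod {α : Type*} [MeasurableSpace α] (μ : Measure α)
    [SigmaFinite μ] :
    ∀ (n : ℕ) (f : Fin n → α → ℝ≥0∞), (∀ i, Measurable (f i)) →
      ∫⁻ x : Fin n → α, ∏ i, f i (x i) ∂(Measure.pi fun _ => μ)
        = ∏ i, ∫⁻ x, f i x ∂μ := by
  intro n
  induction n with
  | zero =>
    intro f hf
    simp [lintegral_const, Measure.pi_univ]
  | succ n ih =>
    intro f hf
    have h := measurePreserving_piFinSuccAbove (fun _ : Fin (n + 1) => μ) 0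
    have hg : Measurable fun p : α × (Fin n → α) =>
        f 0 p.1 * ∏ j, f j.succ (p.2 j) := by
      refine ((hf 0).comp measurable_fst).mul ?_
      exact Finset.measurable_prod _ fun j _ =>
        (hf j.succ).comp ((measurable_pi_apply j).comp measurable_snd)
    have key : ∫⁻ x : Fin (n + 1) → α, ∏ i, f i (x i) ∂(Measure.pi fun _ => μ)
        = ∫⁻ p : α × (Fin n → α), f 0 p.1 * ∏ j, f j.succ (p.2 j)
            ∂(μ.prod (Measure.pi fun _ => μ)) := by
      rw [← h.lintegral_comp hg]
      refine lintegral_congr fun x => ?_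
      simp [MeasurableEquiv.piFinSuccAbove, Fin.prod_univ_succ, Fin.zero_succAbove,
        Fin.tail]
    rw [key,
      lintegral_prod_mul (f := f 0) (g := fun y : Fin n → α => ∏ j, f j.succ (y j))
        (hf 0).aemeasurable
        (Finset.measurable_prod _ fun j _ =>
          (hf j.succ).comp (measurable_pi_apply j)).aemeasurable,
      ih (fun j => f j.succ) (fun j => hf j.succ), Fin.prod_univ_succ]

/-- Independent draws `Z_i ~ P_i` with `P_i ≪ P_1` for `i ≥ 2` are weighted exchangeable:
their joint law is the permutation-invariant base measure `∏ P_1` tilted by the weight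
functions `w_1 = 1`, `w_i = dP_i/dP_1`. -/
theorem stmt_4 (n : ℕ) (P : Fin (n + 1) → Measure ℝ)
    [∀ i, IsProbabilityMeasure (P i)]
    (hac : ∀ i, i ≠ 0 → P i ≪ P 0) :
    (Measure.pi P = (Measure.pi fun _ : Fin (n + 1) => P 0).withDensity
        (fun z => ∏ i, if i = 0 then 1 else (P i).rnDeriv (P 0) (z i)))
      ∧ ∀ σ : Equiv.Perm (Fin (n + 1)),
        Measure.map (fun z : Fin (n + 1) → ℝ => z ∘ σ)
            (Measure.pi fun _ : Fin (n + 1) => P 0)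
          = Measure.pi fun _ : Fin (n + 1) => P 0 := by
  set w : Fin (n + 1) → ℝ → ℝ≥0∞ := fun i =>
    if i = 0 then 1 else (P i).rnDeriv (P 0)
  have hwdef : (fun z : Fin (n + 1) → ℝ =>
      ∏ i, if i = 0 then 1 else (P i).rnDeriv (P 0) (z i))
      = fun z => ∏ i, w i (z i) := by
    funext z
    refine Finset.prod_congr rfl fun i _ => ?_
    by_cases hi : i = 0 <;> simp [w, hi]
  have hw : ∀ i, Measurable (w i) := by
    intro i
    by_cases hi : i = 0 <;> simp [w, hi]
    · exact measurable_const
    · exact Measure.measurable_rnDeriv _ _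
  constructor
  · rw [hwdef]
    refine Measure.pi_eq fun s hs => ?_
    rw [withDensity_apply _ (MeasurableSet.univ_pi hs),
      ← lintegral_indicator (MeasurableSet.univ_pi hs)]
    have hind : ∀ z : Fin (n + 1) → ℝ,
        (Set.pi Set.univ s).indicator (fun z => ∏ i, w i (z i)) z
          = ∏ i, (s i).indicator (w i) (z i) := by
      intro z
      by_cases hz : z ∈ Set.pi Set.univ s
      · rw [Set.indicator_of_mem hz]
        refine Finset.prod_congr rfl fun i _ => ?_
        rw [Set.indicator_of_mem (hz i (Set.mem_univ i))]
      · rw [Set.indicator_of_notMem hz]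
        rw [Set.mem_univ_pi] at hz
        push_neg at hz
        obtain ⟨i, hzi⟩ := hz
        exact (Finset.prod_eq_zero (Finset.mem_univ i)
          (by rw [Set.indicator_of_notMem hzi])).symm
    simp_rw [hind]
    rw [lintegral_pi_prod (P 0) (n + 1) (fun i => (s i).indicator (w i))
      (fun i => (hw i).indicator (hs i))]
    refine Finset.prod_congr rfl fun i _ => ?_
    rw [lintegral_indicator (hs i)]
    by_cases hi : i = 0
    · subst hi
      simp [w]
    · simp only [w, if_neg hi]
      exact Measure.setLIntegral_rnDeriv (hac i hi) _
  · intro σ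
    have hm : Measurable fun z : Fin (n + 1) → ℝ => z ∘ σ :=
      measurable_pi_lambda _ fun j => measurable_pi_apply (σ j)
    refine (Measure.pi_eq fun s hs => ?_).symm
    rw [Measure.map_apply hm (MeasurableSet.univ_pi hs)]
    have hpre : (fun z : Fin (n + 1) → ℝ => z ∘ σ) ⁻¹' Set.pi Set.univ s
        = Set.pi Set.univ fun i => s (σ.symm i) := by
      ext z
      simp only [Set.mem_preimage, Set.mem_univ_pi, Function.comp_apply]
      constructor
      · intro h i
        have := h (σ.symm i)
        rwa [σ.apply_symm_apply] at this
      · intro h j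
        have := h (σ j)
        rwa [σ.symm_apply_apply] at this
    rw [hpre, Measure.pi_pi]
    exact Equiv.prod_comp σ.symm fun i => P 0 (s i)
end

section
/- Let Ĉ^1(X),...,Ĉ^B(X) be B prediction sets each satisfying the marginal miscoverage bound P(Y ∉ Ĉ^b(X)) ≤ αγ for some α ∈ (0,1) and γ ∈ (0,1). Define the aggregated set Ĉ_{B,γ}(x) = { y : (1/B) Σ_{b=1}^B 1[y ∈ Ĉ^b(x)] > 1 - γ }. Then P(Y ∉ Ĉ_{B,γ}(X)) ≤ α. -/
open MeasureTheory
open scoped Classical ENNReal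

/-! Markov's inequality for the number `N(ω)` of the events `Y ∉ Ĉ^b(X)` that occur: the mean of
`N` is at most `B α γ`, and the aggregated set miscovers exactly when `N ≥ γ B`. -/

/-- The sets need not be measurable: the count is dominated by that of their measurable hulls. -/
theorem mul_measure_le_card_filter_mem_le_sum_measure {Ω ι : Type*} [MeasurableSpace Ω]
    [Fintype ι] (μ : Measure Ω) (A : ι → Set Ω) [∀ ω, DecidablePred fun i => ω ∈ A i]
    (t : ℝ≥0∞) :
    t * μ {ω | t ≤ (Finset.univ.filter fun i => ω ∈ A i).card} ≤ ∑ i, μ (A i) := by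
  set f : Ω → ℝ≥0∞ := fun ω => ∑ i, (toMeasurable μ (A i)).indicator 1 ω
  have hf : Measurable f :=
    Finset.measurable_sum _ fun i _ =>
      measurable_one.indicator (measurableSet_toMeasurable μ (A i))
  have card_le : ∀ ω, ((Finset.univ.filter fun i => ω ∈ A i).card : ℝ≥0∞) ≤ f ω := fun ω =>
    calc ((Finset.univ.filter fun i => ω ∈ A i).card : ℝ≥0∞)
        = ∑ i, (A i).indicator 1 ω := by
          simp only [Set.indicator_apply, Pi.one_apply, Finset.sum_boole]
      _ ≤ f ω := Finset.sum_le_sum fun i _ =>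
          Set.indicator_le_indicator_of_subset (subset_toMeasurable μ (A i)) (fun _ => zero_le) ω
  calc t * μ {ω | t ≤ (Finset.univ.filter fun i => ω ∈ A i).card}
      ≤ t * μ {ω | t ≤ f ω} :=
        mul_le_mul_right (measure_mono fun ω h => le_trans h (card_le ω)) t
    _ ≤ ∫⁻ ω, f ω ∂μ := mul_meas_ge_le_lintegral hf t
    _ = ∑ i, μ (A i) := by
        simp only [f]
        rw [lintegral_finsetSum _ fun i _ =>
          measurable_one.indicator (measurableSet_toMeasurable μ (A i))]
        simp only [lintegral_indicator_one (measurableSet_toMeasurable μ _), measure_toMeasurable]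

theorem mul_le_card_filter_not_of_not_lt_div {ι : Type*} [Fintype ι] (p : ι → Prop)
    {g : ℝ} (hpos : 0 < Fintype.card ι)
    (h : ¬ (1 - g < ((Finset.univ.filter p).card : ℝ) / Fintype.card ι)) :
    g * Fintype.card ι ≤ (Finset.univ.filter fun i => ¬ p i).card := by
  have hsplit := Finset.card_filter_add_card_filter_not (s := Finset.univ) p
  rw [Finset.card_univ] at hsplit
  rw [not_lt, div_le_iff₀ (by exact_mod_cast hpos)] at h
  have : ((Finset.univ.filter p).card : ℝ) + (Finset.univ.filter fun i => ¬ p i).card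
      = Fintype.card ι := by exact_mod_cast hsplit
  linarith

theorem stmt_5_general {Ω α β : Type*} [MeasurableSpace Ω] (μ : Measure Ω)
    (X : Ω → α) (Y : Ω → β) (B : ℕ) (hB : 0 < B) (C : Fin B → α → Set β)
    (a g : ℝ) (hg : g ∈ Set.Ioo (0 : ℝ) 1)
    (hcov : ∀ b : Fin B, μ {ω | Y ω ∉ C b (X ω)} ≤ ENNReal.ofReal (a * g)) :
    μ {ω | ¬ (1 - g < ((Finset.univ.filter fun b : Fin B => Y ω ∈ C b (X ω)).card : ℝ) / B)}
      ≤ ENNReal.ofReal a := by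
  set t := ENNReal.ofReal (g * B) with t_def
  have ht : t ≠ 0 := by
    simpa [t, ENNReal.ofReal_eq_zero] using mul_pos hg.1 (Nat.cast_pos.mpr hB)
  have hsub : {ω | ¬ (1 - g < ((Finset.univ.filter fun b : Fin B => Y ω ∈ C b (X ω)).card : ℝ) / B)}
      ⊆ {ω | t ≤ (Finset.univ.filter fun b => ω ∈ {ω | Y ω ∉ C b (X ω)}).card} := by
    intro ω hω
    have := mul_le_card_filter_not_of_not_lt_div (fun b : Fin B => Y ω ∈ C b (X ω))
      (by simpa using hB) (by simpa using hω)
    simpa [t, ← ENNReal.ofReal_natCast] using this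
  have hmarkov : t * μ {ω | t ≤ (Finset.univ.filter fun b => ω ∈ {ω | Y ω ∉ C b (X ω)}).card}
      ≤ t * ENNReal.ofReal a :=
    calc _ ≤ ∑ b, μ {ω | Y ω ∉ C b (X ω)} := mul_measure_le_card_filter_mem_le_sum_measure μ _ t
      _ ≤ ∑ _b : Fin B, ENNReal.ofReal (a * g) := Finset.sum_le_sum fun b _ => hcov b
      _ = t * ENNReal.ofReal a := by
        rw [Finset.sum_const, Finset.card_univ, Fintype.card_fin, nsmul_eq_mul,
          ENNReal.ofReal_mul' hg.1.le, t_def, ENNReal.ofReal_mul hg.1.le, ENNReal.ofReal_natCast]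
        ring
  exact (measure_mono hsub).trans
    ((ENNReal.mul_le_mul_iff_right ht ENNReal.ofReal_ne_top).mp hmarkov)

/-- Aggregation of prediction sets: if each of `B` prediction sets miscovers with probability
at most `α * γ`, then the aggregated set
`Ĉ_{B,γ}(x) = {y : (1/B) ∑_b 1[y ∈ Ĉ^b(x)] > 1 - γ}` miscovers with probability at most `α`. -/
theorem stmt_5 {Ω α β : Type*} [MeasurableSpace Ω] (μ : Measure Ω) [IsProbabilityMeasure μ]
    (X : Ω → α) (Y : Ω → β) (B : ℕ) (hB : 0 < B) (C : Fin B → α → Set β)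
    (a g : ℝ) (ha : a ∈ Set.Ioo (0 : ℝ) 1) (hg : g ∈ Set.Ioo (0 : ℝ) 1)
    (hcov : ∀ b : Fin B, μ {ω | Y ω ∉ C b (X ω)} ≤ ENNReal.ofReal (a * g)) :
    μ {ω | ¬ (1 - g < ((Finset.univ.filter fun b : Fin B => Y ω ∈ C b (X ω)).card : ℝ) / B)}
      ≤ ENNReal.ofReal a :=
  stmt_5_general μ X Y B hB C a g hg hcov
end

section
/- Let S_1,...,S_n, S_{n+1} be random variables such that conditional on the unordered multiset of values {s_1,...,s_{n+1}}, the probability that S_{n+1} equals s_i is p_i with Σ_{i=1}^{n+1} p_i = 1. Then for any α ∈ (0,1), P( S_{n+1} ≤ Quantile(1-α; Σ_{i=1}^n p_i δ_{s_i} + p_{n+1} δ_∞) ) ≥ 1 - α, where Quantile(1-α; μ) denotes the (1-α)-quantile of the distribution μ and δ_∞ puts mass at +∞. -/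
open MeasureTheory ProbabilityTheory

/-- Weighted conformal coverage: if, conditionally on the event `E` (conditioning on the
unordered multiset of values `s`), the test score has the weighted discrete distribution
`∑ i p_i δ_{s_i}`, then the probability that it is at most the `(1-α)`-quantile of
`∑_{i=1}^n p_i δ_{s_i} + p_{n+1} δ_∞` is at least `1 - α`.  (The δ_∞ mass contributes nothing
to the CDF on ℝ; the quantile is assumed finite via `hne`.) -/
theorem stmt_6 {Ω : Type*} [MeasurableSpace Ω] (μ : Measure Ω) [IsProbabilityMeasure μ]
    (n : ℕ) (E : Set Ω) (hE : MeasurableSet E) (hEpos : μ E ≠ 0)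
    (Stest : Ω → ℝ) (s : Fin (n + 1) → ℝ) (p : Fin (n + 1) → ℝ)
    (hp : ∀ i, 0 ≤ p i) (hsum : ∑ i, p i = 1)
    (hdist : ∀ t : ℝ, ((μ[|E]) {ω | Stest ω ≤ t}).toReal
      = ∑ i ∈ Finset.univ.filter (fun i => s i ≤ t), p i)
    (α : ℝ) (hα : α ∈ Set.Ioo (0 : ℝ) 1)
    (hne : {t : ℝ | 1 - α ≤
      ∑ i ∈ Finset.univ.filter (fun i : Fin n => s i.castSucc ≤ t), p i.castSucc}.Nonempty) :
    1 - α ≤ ((μ[|E]) {ω | Stest ω ≤ sInf {t : ℝ | 1 - α ≤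
      ∑ i ∈ Finset.univ.filter (fun i : Fin n => s i.castSucc ≤ t), p i.castSucc}}).toReal := by
  set T := {t : ℝ | 1 - α ≤
      ∑ i ∈ Finset.univ.filter (fun i : Fin n => s i.castSucc ≤ t), p i.castSucc} with hT
  set Q := sInf T with hQdef
  obtain ⟨t, htT, hsub⟩ : ∃ t ∈ T,
      (Finset.univ.filter (fun i : Fin n => s i.castSucc ≤ t)) ⊆
        Finset.univ.filter (fun i : Fin n => s i.castSucc ≤ Q) := by
    by_cases hB : (Finset.univ.filter (fun i : Fin n => Q < s i.castSucc)).Nonempty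
    · set c := (Finset.univ.filter (fun i : Fin n => Q < s i.castSucc)).inf' hB
        (fun i => s i.castSucc) with hc
      have hQc : Q < c := by
        rw [hc, Finset.lt_inf'_iff]
        intro i hi
        exact (Finset.mem_filter.mp hi).2
      have hex : ∃ t ∈ T, t < c := by
        by_contra h
        push_neg at h
        exact absurd (le_csInf hne h) (not_le.mpr hQc)
      obtain ⟨t, htT, htc⟩ := hex
      refine ⟨t, htT, fun i hi => ?_⟩
      simp only [Finset.mem_filter, Finset.mem_univ, true_and] at hi ⊢
      by_contra hQi
      push_neg at hQi
      have : c ≤ s i.castSucc := Finset.inf'_le _ (by simp [hQi])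
      linarith
    · obtain ⟨t, htT⟩ := hne
      refine ⟨t, htT, fun i _ => ?_⟩
      simp only [Finset.mem_filter, Finset.mem_univ, true_and]
      by_contra h
      exact hB ⟨i, by simp [not_le.mp h]⟩
  have hQT : 1 - α ≤ ∑ i ∈ Finset.univ.filter (fun i : Fin n => s i.castSucc ≤ Q),
      p i.castSucc :=
    le_trans htT (Finset.sum_le_sum_of_subset_of_nonneg hsub (fun i _ _ => hp _))
  rw [hdist Q]
  refine le_trans hQT ?_
  rw [Finset.sum_filter, Finset.sum_filter, Fin.sum_univ_castSucc]
  exact le_add_of_nonneg_right (by split_ifs; exacts [hp _, le_rfl])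
end

section
/- Let (S_1,...,S_{n'}, S̃) be random variables such that, conditionally on an event E, S̃ has distribution Σ_{i=1}^{n'} p_i δ_{s_i} + p_{n+1} δ_{s̃} where (s_1,...,s_{n'}, s̃) are the realized values and p_i, p_{n+1} are (possibly data-dependent) nonnegative weights summing to 1. Then P( S̃ ≤ Quantile(1−α; Σ_i p_i δ_{s_i} + p_{n+1} δ_∞) | E ) ≥ 1 − α, and integrating over E, the same bound holds unconditionally. -/
open MeasureTheory ProbabilityTheory

/-- Weighted conformal coverage lemma: if, conditionally on the event `E`, the test score has
distribution `∑_{i=1}^{n'+1} p_i δ_{s_i}` (the last atom being the test value `s̃`), then the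
probability (given `E`) that it is at most the `(1−α)`-quantile of
`∑_{i=1}^{n'} p_i δ_{s_i} + p_{n+1} δ_∞` is at least `1 − α`; integrating over `E`, the same
bound holds unconditionally.  The event `{S̃ ≤ Quantile}` is expressed as
`{ω | ∀ t with CDF∞(t) ≥ 1−α, S̃(ω) ≤ t}`, which also covers an infinite quantile. -/
theorem stmt_15 {Ω : Type*} [MeasurableSpace Ω] (μ : Measure Ω) [IsProbabilityMeasure μ]
    (n : ℕ) (E : Set Ω) (hE : MeasurableSet E) (hEpos : μ E ≠ 0)
    (Stil : Ω → ℝ) (s : Fin (n + 1) → ℝ) (p : Fin (n + 1) → ℝ)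
    (hp : ∀ i, 0 ≤ p i) (hsum : ∑ i, p i = 1)
    (hdist : ∀ t : ℝ, ((μ[|E]) {ω | Stil ω ≤ t}).toReal
      = ∑ i ∈ Finset.univ.filter (fun i => s i ≤ t), p i)
    (α : ℝ) (hα : α ∈ Set.Ioo (0 : ℝ) 1) :
    (1 - α ≤ ((μ[|E]) {ω | ∀ t : ℝ,
        (1 - α ≤ ∑ i ∈ Finset.univ.filter (fun i : Fin n => s i.castSucc ≤ t), p i.castSucc)
        → Stil ω ≤ t}).toReal)
    ∧ ENNReal.ofReal (1 - α) * μ E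
      ≤ μ ({ω | ∀ t : ℝ,
          (1 - α ≤ ∑ i ∈ Finset.univ.filter (fun i : Fin n => s i.castSucc ≤ t), p i.castSucc)
          → Stil ω ≤ t} ∩ E) := by
  obtain ⟨hα0, hα1⟩ := hα
  haveI hprob : IsProbabilityMeasure (μ[|E]) := cond_isProbabilityMeasure hEpos
  set Fn : ℝ → ℝ := fun t =>
    ∑ i ∈ Finset.univ.filter (fun i : Fin n => s i.castSucc ≤ t), p i.castSucc with hFn
  set T : Set ℝ := {t | 1 - α ≤ Fn t} with hTdef
  set A : Set Ω := {ω | ∀ t : ℝ, 1 - α ≤ Fn t → Stil ω ≤ t} with hAdef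
  -- Fn is monotone
  have hFnmono : Monotone Fn := by
    intro a b hab
    apply Finset.sum_le_sum_of_subset_of_nonneg
    · intro i hi
      simp only [Finset.mem_filter, Finset.mem_univ, true_and] at hi ⊢
      exact hi.trans hab
    · intro i _ _; exact hp _
  -- main conditional bound
  have hmain : 1 - α ≤ ((μ[|E]) A).toReal := by
    by_cases hTne : T.Nonempty
    · -- T bounded below
      obtain ⟨t', ht'⟩ := hTne
      have hfilne : ∀ t ∈ T,
          (Finset.univ.filter (fun i : Fin n => s i.castSucc ≤ t)).Nonempty := by
        intro t ht
        by_contra hcon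
        rw [Finset.not_nonempty_iff_eq_empty] at hcon
        have h0 : Fn t = 0 := by simp only [hFn]; rw [hcon]; simp
        rw [Set.mem_setOf_eq, h0] at ht
        linarith
      have hnne : (Finset.univ : Finset (Fin n)).Nonempty := by
        obtain ⟨i, _⟩ := hfilne t' ht'
        exact ⟨i, Finset.mem_univ i⟩
      have hbdd : BddBelow T := by
        refine ⟨Finset.univ.inf' hnne (fun i => s i.castSucc), fun t ht => ?_⟩
        obtain ⟨i, hi⟩ := hfilne t ht
        simp only [Finset.mem_filter, Finset.mem_univ, true_and] at hi
        exact le_trans (Finset.inf'_le _ (Finset.mem_univ i)) hi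
      set t0 : ℝ := sInf T with ht0
      -- every t > t0 is in T
      have hTup : ∀ t, t0 < t → t ∈ T := by
        intro t ht
        obtain ⟨t'', ht''T, ht''lt⟩ := exists_lt_of_csInf_lt ⟨t', ht'⟩ ht
        exact le_trans ht''T (hFnmono ht''lt.le)
      -- t0 ∈ T : find t > t0 with the same filter set
      have ht0T : t0 ∈ T := by
        set B : Finset ℝ :=
          (Finset.univ.filter (fun i : Fin n => t0 < s i.castSucc)).image
            (fun i => s i.castSucc) with hBdef
        have : ∃ t : ℝ, t0 < t ∧ ∀ i : Fin n, s i.castSucc ≤ t → s i.castSucc ≤ t0 := by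
          by_cases hB : B.Nonempty
          · have hmlt : t0 < B.min' hB := by
              have hm := B.min'_mem hB
              obtain ⟨i, hi, heq⟩ := Finset.mem_image.mp hm
              rw [Finset.mem_filter] at hi
              exact lt_of_lt_of_eq hi.2 heq
            refine ⟨(t0 + B.min' hB) / 2, by linarith, ?_⟩
            intro i hile
            by_contra hcon
            push_neg at hcon
            have hmem : s i.castSucc ∈ B := by
              rw [hBdef]
              exact Finset.mem_image.mpr ⟨i, Finset.mem_filter.mpr
                ⟨Finset.mem_univ i, hcon⟩, rfl⟩
            have hmin := B.min'_le _ hmem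
            linarith
          · refine ⟨t0 + 1, by linarith, fun i _ => ?_⟩
            by_contra hcon
            push_neg at hcon
            exact hB ⟨s i.castSucc, Finset.mem_image.mpr ⟨i, Finset.mem_filter.mpr
              ⟨Finset.mem_univ i, hcon⟩, rfl⟩⟩
        obtain ⟨t, htgt, hsame⟩ := this
        have hfil : Finset.univ.filter (fun i : Fin n => s i.castSucc ≤ t)
            = Finset.univ.filter (fun i : Fin n => s i.castSucc ≤ t0) := by
          apply Finset.filter_congr
          intro i _
          constructor
          · exact hsame i
          · intro h; exact h.trans htgt.le
        have heqF : Fn t = Fn t0 := by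
          simp only [hFn]
          exact Finset.sum_congr hfil (fun _ _ => rfl)
        have h' : 1 - α ≤ Fn t := hTup t htgt
        exact Set.mem_setOf_eq ▸ (heqF ▸ h')
      -- A = {ω | Stil ω ≤ t0}
      have hAeq : A = {ω | Stil ω ≤ t0} := by
        ext ω
        simp only [hAdef, Set.mem_setOf_eq]
        constructor
        · intro h; exact h t0 ht0T
        · intro h t htT
          exact h.trans (csInf_le hbdd htT)
      -- CDF at t0 dominates Fn t0
      have hF : Fn t0 ≤ ∑ i ∈ Finset.univ.filter (fun i : Fin (n+1) => s i ≤ t0), p i := by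
        simp only [hFn]
        rw [Finset.sum_filter, Finset.sum_filter, Fin.sum_univ_castSucc]
        have hlast : (0:ℝ) ≤ if s (Fin.last n) ≤ t0 then p (Fin.last n) else 0 := by
          split
          · exact hp _
          · exact le_rfl
        linarith
      calc 1 - α ≤ Fn t0 := ht0T
        _ ≤ ∑ i ∈ Finset.univ.filter (fun i : Fin (n+1) => s i ≤ t0), p i := hF
        _ = ((μ[|E]) {ω | Stil ω ≤ t0}).toReal := (hdist t0).symm
        _ = ((μ[|E]) A).toReal := by rw [hAeq]
    · -- T empty: A = univ
      have hAeq : A = Set.univ := by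
        ext ω
        simp only [hAdef, Set.mem_setOf_eq, Set.mem_univ, iff_true]
        intro t ht
        exact absurd ⟨t, ht⟩ hTne
      rw [hAeq, measure_univ]
      simp
      linarith
  refine ⟨hmain, ?_⟩
  have hfin : (μ[|E]) A ≠ ⊤ := measure_ne_top _ _
  have h1 : ENNReal.ofReal (1 - α) ≤ (μ[|E]) A :=
    ENNReal.ofReal_le_of_le_toReal hmain
  have hcond : (μ[|E]) A = (μ E)⁻¹ * μ (E ∩ A) := cond_apply hE μ A
  have hEfin : μ E ≠ ⊤ := measure_ne_top _ _
  have h2 : ENNReal.ofReal (1 - α) * μ E ≤ (μ E)⁻¹ * μ (E ∩ A) * μ E :=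
    mul_le_mul_left (hcond ▸ h1) _
  calc ENNReal.ofReal (1 - α) * μ E ≤ (μ E)⁻¹ * μ (E ∩ A) * μ E := h2
    _ = (μ E)⁻¹ * μ E * μ (E ∩ A) := by ring
    _ = μ (E ∩ A) := by rw [ENNReal.inv_mul_cancel hEpos hEfin, one_mul]
    _ = μ (A ∩ E) := by rw [Set.inter_comm]
end
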